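/- arXiv:1811.03747 — 6 statements merged into one kernel-verified Lean document; each statement's English description precedes it below -/
import Mathlib

section
/- Let G be a blow-up of the directed 5-cycle C⃗₅ with parts X₁, X₂, X₃, X₄, X₅ (so all arcs go from X_i to X_{i+1}, indices modulo 5, and there are no other arcs). Then the number of induced copies of P⃗₄ in G equals Σ_{i=1}^{5} Π_{j ≠ i} |X_j|, i.e., (Π_{i=1}^{5} |X_i|) · (Σ_{i=1}^{5} 1/|X_i|) when all parts are nonempty. -/
/-!
Every arc of a blow-up of `C⃗₅` goes from some part `X_j` to `X_{j+1}`, so an induced `P⃗₄` visits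
the parts `X_{i+1}, X_{i+2}, X_{i+3}, X_{i+4}` in turn, for the one part `X_i` it misses.
Conversely, one vertex from each of these four parts spans exactly that path. So the induced copies
of `P⃗₄` missing `X_i` are the transversals of the other four parts, and there are
`∏_{j ≠ i} |X_j|` of them.
-/

open scoped Classical

/-- An oriented graph: the arc relation has no loops and no 2-cycles. -/
def IsOriented {V : Type*} (A : V → V → Prop) : Prop :=
  ∀ a b : V, A a b → ¬ A b a

/-- `T⃗₃`-freeness: no three vertices span the arcs a→b, b→c, a→c. -/
def T3Free {V : Type*} (A : V → V → Prop) : Prop :=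
  ∀ a b c : V, ¬ (A a b ∧ A b c ∧ A a c)

/-- `S` is the vertex set of an induced copy of the directed path `P⃗ₖ` in the
oriented graph with arc relation `A`. -/
def IsInducedPath {V : Type*} (A : V → V → Prop) (k : ℕ) (S : Finset V) : Prop :=
  ∃ f : Fin k → V, Function.Injective f ∧ (∀ v : V, v ∈ S ↔ ∃ i, f i = v) ∧
    ∀ i j : Fin k, A (f i) (f j) ↔ (j : ℕ) = (i : ℕ) + 1

/-- The number of induced copies of `P⃗ₖ`. -/
noncomputable def numPaths {V : Type*} [Fintype V] [DecidableEq V]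
    (A : V → V → Prop) (k : ℕ) : ℕ :=
  (Finset.univ.filter fun S : Finset V => IsInducedPath A k S).card

/-- The number of induced copies of `P⃗ₖ` containing all vertices of `T`. -/
noncomputable def numPathsThrough {V : Type*} [Fintype V] [DecidableEq V]
    (A : V → V → Prop) (k : ℕ) (T : Finset V) : ℕ :=
  (Finset.univ.filter fun S : Finset V => IsInducedPath A k S ∧ T ⊆ S).card

/-- The density of induced copies of `P⃗ₖ`. -/
noncomputable def pathDensity {V : Type*} [Fintype V] [DecidableEq V]
    (A : V → V → Prop) (k : ℕ) : ℝ :=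
  (numPaths A k : ℝ) / ((Fintype.card V).choose k : ℝ)

/-- The maximum density of induced copies of `P⃗ₖ` over all `T⃗₃`-free oriented
graphs on `n` vertices. -/
noncomputable def maxDensityT3 (k n : ℕ) : ℝ :=
  sSup {d : ℝ | ∃ A : Fin n → Fin n → Prop, IsOriented A ∧ T3Free A ∧ d = pathDensity A k}

/-- The maximum density of induced copies of `P⃗ₖ` over all oriented graphs on `n`
vertices. -/
noncomputable def maxDensityAll (k n : ℕ) : ℝ :=
  sSup {d : ℝ | ∃ A : Fin n → Fin n → Prop, IsOriented A ∧ d = pathDensity A k}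

/-- `S` is the vertex set of an induced copy of the oriented graph `H` in the
oriented graph with arc relation `A`. -/
def IsInducedCopy {V W : Type*} (H : W → W → Prop) (A : V → V → Prop) (S : Finset V) : Prop :=
  ∃ f : W → V, Function.Injective f ∧ (∀ v : V, v ∈ S ↔ ∃ w, f w = v) ∧
    ∀ a b : W, A (f a) (f b) ↔ H a b

/-- The number of induced copies of `H` in `A`. -/
noncomputable def numCopies {V W : Type*} [Fintype V] [DecidableEq V]
    (H : W → W → Prop) (A : V → V → Prop) : ℕ :=
  (Finset.univ.filter fun S : Finset V => IsInducedCopy H A S).card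

/-- The number of (unordered) pairs of vertices on which the two oriented graphs `A`
and `B` differ (an arc must be added, removed, or reoriented). -/
noncomputable def pairDiff {V : Type*} [Fintype V] [LinearOrder V]
    (A B : V → V → Prop) : ℕ :=
  (Finset.univ.filter fun p : V × V => p.1 < p.2 ∧
    ¬ ((A p.1 p.2 ↔ B p.1 p.2) ∧ (A p.2 p.1 ↔ B p.2 p.1))).card

/-- `A` is a blow-up of the directed 5-cycle with parts given by the fibers of `g`. -/
def IsBlowupC5 {V : Type*} (A : V → V → Prop) (g : V → Fin 5) : Prop :=
  ∀ u v : V, A u v ↔ g v = g u + 1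

/-- The size of the part of vertices mapped to `i`. -/
noncomputable def partSize {V : Type*} [Fintype V] {m : ℕ} (g : V → Fin m) (i : Fin m) : ℕ :=
  (Finset.univ.filter fun v : V => g v = i).card

/-- `A` is a balanced blow-up of the directed 5-cycle, i.e. isomorphic to `C⃗₅(n)`. -/
def IsBalancedBlowupC5 {V : Type*} [Fintype V] (A : V → V → Prop) : Prop :=
  ∃ g : V → Fin 5, IsBlowupC5 A g ∧
    ∀ i j : Fin 5, (partSize g i : ℤ) - (partSize g j : ℤ) ≤ 1

def IsTransversal {V ι : Type*} [DecidableEq ι] (g : V → ι) (T : Finset ι) (S : Finset V) :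
    Prop :=
  Set.InjOn g S ∧ S.image g = T

theorem card_isTransversal {V ι : Type*} [Fintype V] [DecidableEq ι] (g : V → ι)
    (T : Finset ι) :
    (Finset.univ.filter (IsTransversal g T)).card =
      ∏ j ∈ T, (Finset.univ.filter fun v => g v = j).card := by
  rw [← Finset.prod_coe_sort, ← Fintype.card_piFinset]
  symm
  refine Finset.card_bij (fun p _ => Finset.univ.image p) ?_ ?_ ?_
  · intro p hp
    simp only [Fintype.mem_piFinset, Finset.mem_filter, Finset.mem_univ, true_and] at hp
    refine Finset.mem_filter.2 ⟨Finset.mem_univ _, ?_, ?_⟩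
    · intro v hv w hw hvw
      obtain ⟨j, -, rfl⟩ := Finset.mem_image.1 hv
      obtain ⟨j', -, rfl⟩ := Finset.mem_image.1 hw
      rw [hp, hp] at hvw
      rw [Subtype.ext hvw]
    · ext j
      simp [hp]
  · intro p hp p' hp' hpp'
    simp only [Fintype.mem_piFinset, Finset.mem_filter, Finset.mem_univ, true_and] at hp hp'
    funext j
    obtain ⟨j', -, hj'⟩ := Finset.mem_image.1 (hpp' ▸ Finset.mem_image_of_mem p (Finset.mem_univ j))
    have : j' = j := Subtype.ext (by rw [← hp' j', hj', hp j])
    rw [← hj', this]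
  · intro S hS
    obtain ⟨hinj, himage⟩ := (Finset.mem_filter.1 hS).2
    have hrep : ∀ j : T, ∃ v ∈ S, g v = j := fun j =>
      Finset.mem_image.1 (himage ▸ j.2)
    choose p hpS hpg using hrep
    refine ⟨p, by simpa using hpg, ?_⟩
    ext v
    simp only [Finset.mem_image, Finset.mem_univ, true_and]
    refine ⟨fun ⟨j, hj⟩ => hj ▸ hpS j, fun hv => ?_⟩
    have hgv : g v ∈ T := himage ▸ Finset.mem_image_of_mem g hv
    exact ⟨⟨g v, hgv⟩, hinj (hpS _) hv (hpg _)⟩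

/-- The part of `C⃗₅` visited in step `k` by the path `P⃗₄` that avoids the part `i`. -/
def pathPart (i : Fin 5) (k : Fin 4) : Fin 5 :=
  i + 1 + k.castSucc

theorem pathPart_injective (i : Fin 5) : Function.Injective (pathPart i) := by
  revert i; unfold pathPart; decide

theorem pathPart_eq_add_one_iff (i : Fin 5) (k l : Fin 4) :
    pathPart i l = pathPart i k + 1 ↔ (l : ℕ) = k + 1 := by
  revert i k l; unfold pathPart; decide

theorem image_pathPart (i : Fin 5) : Finset.univ.image (pathPart i) = Finset.univ.erase i := by
  revert i; unfold pathPart; decide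

theorem pathPart_sub_one (c : Fin 5) (k : Fin 4) : pathPart (c - 1) k = c + k.castSucc := by
  rw [pathPart, sub_add_cancel]

section BlowupC5

variable {V : Type*} [DecidableEq V] {A : V → V → Prop} {g : V → Fin 5}

theorem isTransversal_image_of_comp_eq_pathPart {f : Fin 4 → V} {i : Fin 5}
    (hf : ∀ k, g (f k) = pathPart i k) :
    IsTransversal g (Finset.univ.erase i) (Finset.univ.image f) := by
  refine ⟨?_, ?_⟩
  · intro v hv w hw hvw
    obtain ⟨k, -, rfl⟩ := Finset.mem_image.1 hv
    obtain ⟨l, -, rfl⟩ := Finset.mem_image.1 hw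
    rw [pathPart_injective i (show pathPart i k = pathPart i l by rwa [hf, hf] at hvw)]
  · rw [Finset.image_image, ← image_pathPart i]
    exact Finset.image_congr fun k _ => hf k

theorem IsBlowupC5.isInducedPath_image (hg : IsBlowupC5 A g) {f : Fin 4 → V} {i : Fin 5}
    (hf : ∀ k, g (f k) = pathPart i k) :
    IsInducedPath A 4 (Finset.univ.image f) := by
  refine ⟨f, fun k l hkl => pathPart_injective i ?_, by simp, fun k l => ?_⟩
  · rw [← hf, ← hf, hkl]
  · rw [hg, hf, hf, pathPart_eq_add_one_iff]

theorem IsBlowupC5.exists_isTransversal_of_isInducedPath (hg : IsBlowupC5 A g)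
    {S : Finset V} (hS : IsInducedPath A 4 S) :
    ∃ i, IsTransversal g (Finset.univ.erase i) S := by
  obtain ⟨f, -, hmem, harc⟩ := hS
  have hstep : ∀ k : Fin 3, g (f k.succ) = g (f k.castSucc) + 1 := fun k =>
    (hg _ _).1 ((harc _ _).2 rfl)
  have hf : ∀ k, g (f k) = pathPart (g (f 0) - 1) k := by
    intro k
    rw [pathPart_sub_one]
    induction k using Fin.induction with
    | zero => simp
    | succ k ih => rw [hstep, ih, add_assoc, Fin.coeSucc_eq_succ, Fin.succ_castSucc]
  have hS : S = Finset.univ.image f := by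
    ext v
    simp [hmem]
  exact ⟨_, hS ▸ isTransversal_image_of_comp_eq_pathPart hf⟩

theorem IsBlowupC5.isInducedPath_of_isTransversal (hg : IsBlowupC5 A g) {S : Finset V}
    {i : Fin 5} (hS : IsTransversal g (Finset.univ.erase i) S) : IsInducedPath A 4 S := by
  obtain ⟨hinj, himage⟩ := hS
  have hrep : ∀ k, ∃ v ∈ S, g v = pathPart i k := fun k =>
    Finset.mem_image.1 (himage ▸ image_pathPart i ▸ Finset.mem_image_of_mem _ (Finset.mem_univ k))
  choose f hfS hf using hrep
  suffices S = Finset.univ.image f from this ▸ hg.isInducedPath_image hf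
  ext v
  simp only [Finset.mem_image, Finset.mem_univ, true_and]
  refine ⟨fun hv => ?_, fun ⟨k, hk⟩ => hk ▸ hfS k⟩
  obtain ⟨k, -, hk⟩ := Finset.mem_image.1
    (image_pathPart i ▸ himage ▸ Finset.mem_image_of_mem g hv)
  exact ⟨k, hinj (hfS k) hv (by rw [hf, hk])⟩

theorem IsBlowupC5.isInducedPath_iff (hg : IsBlowupC5 A g) (S : Finset V) :
    IsInducedPath A 4 S ↔ ∃ i, IsTransversal g (Finset.univ.erase i) S :=
  ⟨hg.exists_isTransversal_of_isInducedPath, fun ⟨_, hS⟩ => hg.isInducedPath_of_isTransversal hS⟩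

end BlowupC5

/-- In a blow-up of the directed 5-cycle with parts `X₁, …, X₅`,
the number of induced copies of `P⃗₄` equals `Σᵢ Πⱼ≠ᵢ |Xⱼ|`. -/
theorem numPaths_blowupC5 {V : Type*} [Fintype V] [DecidableEq V]
    (A : V → V → Prop) (g : V → Fin 5) (hg : IsBlowupC5 A g) :
    numPaths A 4 = ∑ i : Fin 5, ∏ j ∈ Finset.univ.erase i, partSize g j := by
  have hpaths : Finset.univ.filter (IsInducedPath A 4) =
      Finset.univ.biUnion fun i => Finset.univ.filter (IsTransversal g (Finset.univ.erase i)) := by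
    ext S
    simp [hg.isInducedPath_iff]
  have hdisj : (Set.univ : Set (Fin 5)).PairwiseDisjoint
      fun i => Finset.univ.filter (IsTransversal g (Finset.univ.erase i)) := by
    intro i _ i' _ hii'
    refine Finset.disjoint_filter.2 fun S _ hS hS' => hii' ?_
    exact (Finset.erase_inj _ (Finset.mem_univ i)).1 (hS.2.symm.trans hS'.2)
  rw [numPaths, hpaths, Finset.card_biUnion (by simpa using hdisj)]
  exact Finset.sum_congr rfl fun i _ => card_isTransversal g _
end

section
/- Let x₁, x₂, x₃, x₄, x₅ be nonnegative real numbers with x₁ + x₂ + x₃ + x₄ + x₅ = n. Then Σ_{i=1}^{5} Π_{j ≠ i} x_j ≤ 5·(n/5)⁴ = n⁴/125, with equality if and only if x_i = n/5 for every i. -/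
open scoped Classical

/-!
The sum is the fourth elementary symmetric polynomial `e₄` of the `xᵢ`, and the claim is the
case `k = 4` of Maclaurin's inequality `e₄ / 5 ≤ (e₁ / 5) ⁴`. It follows from an explicit
certificate: `12 (e₁⁴ - 125 e₄)` is a sum over the ten pairs `{xᵢ, xⱼ}` of `(xᵢ - xⱼ)²` times a
polynomial with nonnegative coefficients that is positive unless `xᵢ = xⱼ = 0`. Hence the
difference is nonnegative on the nonnegative orthant and vanishes only when all `xᵢ` agree.
-/

open Finset

theorem sum_prod_erase_fin_five {R : Type*} [CommSemiring R] (x : Fin 5 → R) :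
    ∑ i : Fin 5, ∏ j ∈ univ.erase i, x j =
      x 1 * x 2 * x 3 * x 4 + x 0 * x 2 * x 3 * x 4 + x 0 * x 1 * x 3 * x 4 +
        x 0 * x 1 * x 2 * x 4 + x 0 * x 1 * x 2 * x 3 := by
  simp [Fin.sum_univ_five, ← filter_ne', prod_filter, Fin.prod_univ_five]

/-- Matching coefficients in `pow_four_sub_esymm_four_eq_sum_sq_mul_maclaurinWeight` leaves a
one-parameter family of weights with nonnegative coefficients, symmetric in `a, b` and in
`c, d, e`; this is one member of it. -/
def maclaurinWeight {R : Type*} [CommRing R] (a b c d e : R) : R :=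
  3 * (a ^ 2 + b ^ 2) + 54 * a * b + 29 * (c ^ 2 + d ^ 2 + e ^ 2) + 101 * (c * d + c * e + d * e)

theorem pow_four_sub_esymm_four_eq_sum_sq_mul_maclaurinWeight {R : Type*} [CommRing R]
    (a b c d e : R) :
    12 * ((a + b + c + d + e) ^ 4 -
        125 * (b * c * d * e + a * c * d * e + a * b * d * e + a * b * c * e + a * b * c * d)) =
      (a - b) ^ 2 * maclaurinWeight a b c d e + (a - c) ^ 2 * maclaurinWeight a c b d e +
      (a - d) ^ 2 * maclaurinWeight a d b c e + (a - e) ^ 2 * maclaurinWeight a e b c d +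
      (b - c) ^ 2 * maclaurinWeight b c a d e + (b - d) ^ 2 * maclaurinWeight b d a c e +
      (b - e) ^ 2 * maclaurinWeight b e a c d + (c - d) ^ 2 * maclaurinWeight c d a b e +
      (c - e) ^ 2 * maclaurinWeight c e a b d + (d - e) ^ 2 * maclaurinWeight d e a b c := by
  simp only [maclaurinWeight]
  ring

section Nonneg

variable {a b c d e : ℝ}

theorem sq_sub_mul_maclaurinWeight_nonneg (ha : 0 ≤ a) (hb : 0 ≤ b) (hc : 0 ≤ c)
    (hd : 0 ≤ d) (he : 0 ≤ e) : 0 ≤ (a - b) ^ 2 * maclaurinWeight a b c d e := by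
  unfold maclaurinWeight
  positivity

theorem eq_of_sq_sub_mul_maclaurinWeight_eq_zero (ha : 0 ≤ a) (hb : 0 ≤ b) (hc : 0 ≤ c)
    (hd : 0 ≤ d) (he : 0 ≤ e) (h : (a - b) ^ 2 * maclaurinWeight a b c d e = 0) : a = b := by
  rcases mul_eq_zero.mp h with h | h
  · exact sub_eq_zero.mp (pow_eq_zero_iff two_ne_zero |>.mp h)
  · have : a ^ 2 + b ^ 2 = 0 := by
      unfold maclaurinWeight at h
      apply le_antisymm _ (by positivity)
      nlinarith [mul_nonneg ha hb, mul_nonneg hc hd, mul_nonneg hc he, mul_nonneg hd he,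
        sq_nonneg c, sq_nonneg d, sq_nonneg e]
    nlinarith [sq_nonneg a, sq_nonneg b]

theorem sq_sub_mul_maclaurinWeight_le (ha : 0 ≤ a) (hb : 0 ≤ b) (hc : 0 ≤ c) (hd : 0 ≤ d)
    (he : 0 ≤ e) :
    (a - b) ^ 2 * maclaurinWeight a b c d e ≤ 12 * ((a + b + c + d + e) ^ 4 -
        125 * (b * c * d * e + a * c * d * e + a * b * d * e + a * b * c * e + a * b * c * d)) := by
  rw [pow_four_sub_esymm_four_eq_sum_sq_mul_maclaurinWeight]
  linarith [sq_sub_mul_maclaurinWeight_nonneg ha hc hb hd he,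
    sq_sub_mul_maclaurinWeight_nonneg ha hd hb hc he,
    sq_sub_mul_maclaurinWeight_nonneg ha he hb hc hd,
    sq_sub_mul_maclaurinWeight_nonneg hb hc ha hd he,
    sq_sub_mul_maclaurinWeight_nonneg hb hd ha hc he,
    sq_sub_mul_maclaurinWeight_nonneg hb he ha hc hd,
    sq_sub_mul_maclaurinWeight_nonneg hc hd ha hb he,
    sq_sub_mul_maclaurinWeight_nonneg hc he ha hb hd,
    sq_sub_mul_maclaurinWeight_nonneg hd he ha hb hc]

theorem mul_esymm_four_le_pow_four (ha : 0 ≤ a) (hb : 0 ≤ b) (hc : 0 ≤ c) (hd : 0 ≤ d)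
    (he : 0 ≤ e) :
    125 * (b * c * d * e + a * c * d * e + a * b * d * e + a * b * c * e + a * b * c * d) ≤
      (a + b + c + d + e) ^ 4 := by
  linarith [sq_sub_mul_maclaurinWeight_le ha hb hc hd he,
    sq_sub_mul_maclaurinWeight_nonneg ha hb hc hd he]

theorem eq_of_mul_esymm_four_eq_pow_four (ha : 0 ≤ a) (hb : 0 ≤ b) (hc : 0 ≤ c) (hd : 0 ≤ d)
    (he : 0 ≤ e)
    (h : 125 * (b * c * d * e + a * c * d * e + a * b * d * e + a * b * c * e + a * b * c * d) =
      (a + b + c + d + e) ^ 4) :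
    a = b :=
  eq_of_sq_sub_mul_maclaurinWeight_eq_zero ha hb hc hd he <|
    le_antisymm (by linarith [sq_sub_mul_maclaurinWeight_le ha hb hc hd he])
      (sq_sub_mul_maclaurinWeight_nonneg ha hb hc hd he)

end Nonneg

/-- If `x₁,…,x₅ ≥ 0` sum to `n`, then `Σᵢ Πⱼ≠ᵢ xⱼ ≤ 5·(n/5)⁴`, with
equality if and only if all `xᵢ = n/5`. -/
theorem sum_prod_erase_le (n : ℝ) (x : Fin 5 → ℝ) (hx : ∀ i, 0 ≤ x i)
    (hsum : ∑ i, x i = n) :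
    (∑ i : Fin 5, ∏ j ∈ Finset.univ.erase i, x j) ≤ 5 * (n / 5) ^ 4 ∧
    ((∑ i : Fin 5, ∏ j ∈ Finset.univ.erase i, x j) = 5 * (n / 5) ^ 4 ↔
      ∀ i, x i = n / 5) := by
  rw [Fin.sum_univ_five] at hsum
  have hbound : 5 * (n / 5) ^ 4 = (x 0 + x 1 + x 2 + x 3 + x 4) ^ 4 / 125 := by
    rw [hsum]; ring
  rw [sum_prod_erase_fin_five, hbound]
  have hx0 := hx 0; have hx1 := hx 1; have hx2 := hx 2; have hx3 := hx 3; have hx4 := hx 4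
  refine ⟨by linarith [mul_esymm_four_le_pow_four hx0 hx1 hx2 hx3 hx4],
    fun h => ?_, fun h => ?_⟩
  · have h01 := eq_of_mul_esymm_four_eq_pow_four hx0 hx1 hx2 hx3 hx4 (by linarith)
    have h02 := eq_of_mul_esymm_four_eq_pow_four hx0 hx2 hx1 hx3 hx4 (by linarith)
    have h03 := eq_of_mul_esymm_four_eq_pow_four hx0 hx3 hx1 hx2 hx4 (by linarith)
    have h04 := eq_of_mul_esymm_four_eq_pow_four hx0 hx4 hx1 hx2 hx3 (by linarith)
    intro i
    fin_cases i <;> simp only [Fin.zero_eta, Fin.mk_one, Fin.reduceFinMk] <;> linarith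
  · simp only [h]
    ring
end

section
/- Let G be an oriented graph, let x and y be distinct vertices of G, and let G' be obtained from G by deleting y and adding a new vertex x' whose in-neighbors and out-neighbors are exactly those of x in G − y, with no arc between x and x'. Then: (i) if G is T⃗₃-free, so is G'; and (ii) P⃗₄(G') − P⃗₄(G) = P⃗₄(G, x) − P⃗₄(G, y) − P⃗₄(G, {x,y}), where P⃗₄(H) is the number of induced copies of P⃗₄ in H, P⃗₄(H, v) is the number of induced copies of P⃗₄ in H containing the vertex v, and P⃗₄(H, {x,y}) is the number of induced copies of P⃗₄ in H containing both x and y. -/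
open scoped Classical

/-!
Collapsing the clone `y` of `B` onto `x` is a homomorphism `B → A`, so a transitive triangle of
`B` would map to one of `A`. For the count, `B` and `A` agree away from `y`; an induced `P⃗₄` of
`B` through `y` cannot also contain `x`, because in an induced directed path no two distinct
non-adjacent vertices have the same out-neighbours; and swapping `x` and `y` turns the induced
`P⃗₄`s of `B` through `y` bijectively into those of `A` through `x` avoiding `y`.
-/

open Finset

section InducedPath

variable {V W : Type*} {k : ℕ}

theorem IsInducedPath.map {A : V → V → Prop} {B : W → W → Prop} {S : Finset V} (f : V ↪ W)
    (hf : ∀ u ∈ S, ∀ v ∈ S, B (f u) (f v) ↔ A u v) (h : IsInducedPath A k S) :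
    IsInducedPath B k (S.map f) := by
  obtain ⟨g, hg, hmem, harc⟩ := h
  have hgS : ∀ i, g i ∈ S := fun i => (hmem _).2 ⟨i, rfl⟩
  refine ⟨f ∘ g, f.injective.comp hg, fun w => ?_, fun i j => ?_⟩
  · simp only [mem_map, hmem, Function.comp_apply]
    constructor
    · rintro ⟨_, ⟨i, rfl⟩, rfl⟩
      exact ⟨i, rfl⟩
    · rintro ⟨i, rfl⟩
      exact ⟨g i, ⟨i, rfl⟩, rfl⟩
  · rw [Function.comp_apply, Function.comp_apply, hf _ (hgS i) _ (hgS j), harc]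

theorem isInducedPath_map_equiv_iff {A : V → V → Prop} {B : W → W → Prop} {S : Finset V}
    (e : V ≃ W) (he : ∀ u ∈ S, ∀ v ∈ S, B (e u) (e v) ↔ A u v) :
    IsInducedPath B k (S.map e.toEmbedding) ↔ IsInducedPath A k S := by
  refine ⟨fun h => ?_, IsInducedPath.map e.toEmbedding he⟩
  have hsymm : ∀ u ∈ S.map e.toEmbedding, ∀ v ∈ S.map e.toEmbedding,
      A (e.symm u) (e.symm v) ↔ B u v := by
    simp only [mem_map_equiv]
    intro u hu v hv
    simpa using (he _ hu _ hv).symm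
  simpa [map_map] using h.map e.symm.toEmbedding hsymm

theorem isInducedPath_congr {A B : V → V → Prop} {S : Finset V}
    (h : ∀ u ∈ S, ∀ v ∈ S, B u v ↔ A u v) : IsInducedPath B k S ↔ IsInducedPath A k S := by
  simpa using isInducedPath_map_equiv_iff (k := k) (Equiv.refl V) h

theorem IsInducedPath.eq_of_twins {A : V → V → Prop} {S : Finset V} (hS : IsInducedPath A k S)
    {a b : V} (ha : a ∈ S) (hb : b ∈ S) (hab : ¬ A a b) (hba : ¬ A b a)
    (hout : ∀ v ∈ S, v ≠ a → v ≠ b → (A a v ↔ A b v)) : a = b := by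
  obtain ⟨f, hf, hmem, harc⟩ := hS
  obtain ⟨i, rfl⟩ := (hmem a).1 ha
  obtain ⟨j, rfl⟩ := (hmem b).1 hb
  wlog hij : i < j generalizing i j
  · rcases (not_lt.1 hij).lt_or_eq with hji | rfl
    · exact (this j hb i ha hba hab (fun v hv hvb hva => (hout v hv hva hvb).symm) hji).symm
    · rfl
  -- The successor of the earlier vertex is an out-neighbour of one twin but not of the other.
  have hj : (i : ℕ) + 1 < j := by
    have : (j : ℕ) ≠ i + 1 := fun h => hab ((harc i j).2 h)
    omega
  set m : Fin k := ⟨i + 1, by omega⟩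
  have hmi : m ≠ i := fun h => by simp [m, Fin.ext_iff] at h
  have hmj : m ≠ j := fun h => by simp [m, Fin.ext_iff] at h; omega
  have := (hout (f m) ((hmem _).2 ⟨m, rfl⟩) (hf.ne hmi) (hf.ne hmj)).1 ((harc i m).2 rfl)
  rw [harc] at this
  simp [m] at this
  omega

end InducedPath

section Counting

variable {V : Type*} [Fintype V] [DecidableEq V]

noncomputable def numPathsThroughAvoiding (A : V → V → Prop) (k : ℕ) (T : Finset V) (y : V) :
    ℕ :=
  (univ.filter fun S : Finset V => IsInducedPath A k S ∧ T ⊆ S ∧ y ∉ S).card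

theorem numPaths_eq_numPathsThrough_empty (A : V → V → Prop) (k : ℕ) :
    numPaths A k = numPathsThrough A k ∅ := by
  simp [numPaths, numPathsThrough]

theorem numPathsThrough_eq_avoiding_add (A : V → V → Prop) (k : ℕ) (T : Finset V) (y : V) :
    numPathsThrough A k T = numPathsThroughAvoiding A k T y + numPathsThrough A k (insert y T) := by
  rw [numPathsThrough, ← card_filter_add_card_filter_not (p := fun S => y ∉ S), filter_filter,
    filter_filter, numPathsThroughAvoiding, numPathsThrough]
  simp only [not_not, insert_subset_iff, and_assoc]
  congr 2
  ext S
  simp only [mem_filter]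
  tauto

end Counting

structure IsCloneReplacement {V : Type*} (A B : V → V → Prop) (x y : V) : Prop where
  agree : ∀ u v : V, u ≠ y → v ≠ y → (B u v ↔ A u v)
  clone : ∀ v : V, v ≠ y → v ≠ x → (B y v ↔ A x v) ∧ (B v y ↔ A v x)
  not_arc_xy : ¬ B x y
  not_arc_yx : ¬ B y x
  not_loop : ¬ B y y

namespace IsCloneReplacement

open Equiv

variable {V : Type*} {A B : V → V → Prop} {x y : V} {k : ℕ}

theorem arc_fold (h : IsCloneReplacement A B x y) {u v : V} (huv : B u v) :
    A (if u = y then x else u) (if v = y then x else v) := by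
  by_cases hu : u = y <;> by_cases hv : v = y
  · subst hu hv
    exact absurd huv h.not_loop
  · subst hu
    have hvx : v ≠ x := by
      rintro rfl
      exact h.not_arc_yx huv
    simpa [hv] using (h.clone v hv hvx).1.1 huv
  · subst hv
    have hux : u ≠ x := by
      rintro rfl
      exact h.not_arc_xy huv
    simpa [hu] using (h.clone u hu hux).2.1 huv
  · simpa [hu, hv] using (h.agree u v hu hv).1 huv

theorem t3Free (h : IsCloneReplacement A B x y) (hA : T3Free A) : T3Free B :=
  fun _ _ _ ⟨hab, hbc, hac⟩ => hA _ _ _ ⟨h.arc_fold hab, h.arc_fold hbc, h.arc_fold hac⟩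

theorem isInducedPath_iff (h : IsCloneReplacement A B x y) {S : Finset V} (hyS : y ∉ S) :
    IsInducedPath B k S ↔ IsInducedPath A k S :=
  isInducedPath_congr fun u hu v hv =>
    h.agree u v (ne_of_mem_of_not_mem hu hyS) (ne_of_mem_of_not_mem hv hyS)

theorem notMem_of_isInducedPath (h : IsCloneReplacement A B x y) (hxy : x ≠ y) {S : Finset V}
    (hS : IsInducedPath B k S) (hyS : y ∈ S) : x ∉ S := fun hxS =>
  hxy <| hS.eq_of_twins hxS hyS h.not_arc_xy h.not_arc_yx fun v _ hvx hvy => by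
    rw [h.agree x v hxy hvy, (h.clone v hvy hvx).1]

variable [DecidableEq V]

theorem arc_swap_iff (h : IsCloneReplacement A B x y) (hA : IsOriented A) {u v : V}
    (hu : u ≠ y) (hv : v ≠ y) : B (swap x y u) (swap x y v) ↔ A u v := by
  rcases eq_or_ne u x with rfl | hux
  · rcases eq_or_ne v u with rfl | hvx
    · rw [swap_apply_left]
      exact iff_of_false h.not_loop fun hvv => hA v v hvv hvv
    · rw [swap_apply_left, swap_apply_of_ne_of_ne hvx hv]
      exact (h.clone v hv hvx).1
  rcases eq_or_ne v x with rfl | hvx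
  · rw [swap_apply_left, swap_apply_of_ne_of_ne hux hu]
    exact (h.clone u hu hux).2
  · rw [swap_apply_of_ne_of_ne hux hu, swap_apply_of_ne_of_ne hvx hv]
    exact h.agree u v hu hv

theorem isInducedPath_map_swap_iff (h : IsCloneReplacement A B x y) (hA : IsOriented A)
    {S : Finset V} (hyS : y ∉ S) :
    IsInducedPath B k (S.map (swap x y).toEmbedding) ↔ IsInducedPath A k S :=
  isInducedPath_map_equiv_iff _ fun _ hu _ hv =>
    h.arc_swap_iff hA (ne_of_mem_of_not_mem hu hyS) (ne_of_mem_of_not_mem hv hyS)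

variable [Fintype V]

theorem numPathsThroughAvoiding_empty_eq (h : IsCloneReplacement A B x y) :
    numPathsThroughAvoiding B k ∅ y = numPathsThroughAvoiding A k ∅ y := by
  unfold numPathsThroughAvoiding
  congr 1
  exact filter_congr fun S _ => and_congr_left fun ⟨_, hyS⟩ => h.isInducedPath_iff hyS

theorem numPathsThrough_clone_eq (h : IsCloneReplacement A B x y) (hA : IsOriented A)
    (hxy : x ≠ y) : numPathsThrough B k {y} = numPathsThroughAvoiding A k {x} y := by
  symm
  refine card_equiv (swap x y).finsetCongr fun S => ?_
  have hmem : ∀ v, v ∈ S.map (swap x y).toEmbedding ↔ swap x y v ∈ S := by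
    simp [mem_map_equiv]
  simp only [mem_filter, mem_univ, true_and, singleton_subset_iff, finsetCongr_apply, hmem,
    swap_apply_right]
  constructor
  · rintro ⟨hS, hxS, hyS⟩
    exact ⟨(h.isInducedPath_map_swap_iff hA hyS).2 hS, hxS⟩
  · rintro ⟨hS, hxS⟩
    have hyS : y ∉ S := fun hyS =>
      h.notMem_of_isInducedPath hxy hS (by simpa [hmem]) (by simpa [hmem])
    exact ⟨(h.isInducedPath_map_swap_iff hA hyS).1 hS, hxS, hyS⟩

end IsCloneReplacement

/-- Let `B` be obtained from the oriented graph `A` by deleting the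
vertex `y` and adding in its place a clone `x'` of `x` (here the vertex `y` of `B`
plays the role of `x'`: it has the same in- and out-neighbours as `x` away from
`{x, y}`, and is non-adjacent to `x`). Then (i) if `A` is `T⃗₃`-free so is `B`, and
(ii) `P⃗₄(B) − P⃗₄(A) = P⃗₄(A,x) − P⃗₄(A,y) − P⃗₄(A,{x,y})`. -/
theorem clone_vertex_count {V : Type*} [Fintype V] [DecidableEq V]
    (A B : V → V → Prop) (hA : IsOriented A) (x y : V) (hxy : x ≠ y)
    (hB1 : ∀ u v : V, u ≠ y → v ≠ y → (B u v ↔ A u v))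
    (hB2 : ∀ v : V, v ≠ y → v ≠ x → (B y v ↔ A x v) ∧ (B v y ↔ A v x))
    (hB3 : ¬ B x y ∧ ¬ B y x ∧ ¬ B y y) :
    (T3Free A → T3Free B) ∧
    (numPaths B 4 : ℤ) - (numPaths A 4 : ℤ) =
      (numPathsThrough A 4 {x} : ℤ) - (numPathsThrough A 4 {y} : ℤ) -
        (numPathsThrough A 4 ({x, y} : Finset V) : ℤ) := by
  have h : IsCloneReplacement A B x y := ⟨hB1, hB2, hB3.1, hB3.2.1, hB3.2.2⟩
  refine ⟨h.t3Free, ?_⟩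
  have hB := numPathsThrough_eq_avoiding_add B 4 ∅ y
  have hA₀ := numPathsThrough_eq_avoiding_add A 4 ∅ y
  have hAx := numPathsThrough_eq_avoiding_add A 4 {x} y
  rw [h.numPathsThroughAvoiding_empty_eq, insert_empty, h.numPathsThrough_clone_eq hA hxy] at hB
  rw [insert_empty] at hA₀
  rw [pair_comm] at hAx
  rw [numPaths_eq_numPathsThrough_empty, numPaths_eq_numPathsThrough_empty, hB, hA₀, hAx]
  push_cast
  ring
end

section
/- For every integer k ≥ 2 and every oriented graph G on n vertices, the number of induced copies of the directed path P⃗_k in G is at most n^k / (k−1)^{k−1}. Consequently, the inducibility of P⃗_k over all oriented graphs satisfies I(P⃗_k) ≤ k! / (k−1)^{k−1}. -/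
open scoped Classical

/-!
Every induced copy of `P⃗ₖ` is the image of a map `Fin k → V` tracing it, so it suffices to count
such maps. Let `E_k(u, s)` be the number of ways to continue an induced path from `u` by `k`
further vertices inside `s`. The next vertex is an out-neighbour of `u` and every later one is a
non-neighbour of `u`; these are disjoint parts of `s`, so by induction and AM-GM
`E_{k+1}(u, s) ≤ |N⁺(u) ∩ s| · (|s'|/k)^k ≤ (|s|/(k+1))^(k+1)`. Summing over the first vertex
gives at most `n · (n/(k-1))^(k-1)` copies, and `C(n, k) ~ n^k / k!` turns this into the density
bound.
-/

open Finset Filter Topology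

theorem mul_div_pow_le_add_div_pow {a b : ℝ} (ha : 0 ≤ a) (hb : 0 ≤ b) (k : ℕ) :
    a * (b / k) ^ k ≤ ((a + b) / (k + 1)) ^ (k + 1) := by
  rcases Nat.eq_zero_or_pos k with rfl | hk
  · simpa using hb
  set t := b / k
  have ht : 0 ≤ t := by positivity
  have hb_eq : b = k * t := (mul_div_cancel₀ b (by positivity)).symm
  -- unweighted AM-GM for the `k + 1` numbers `a, t, …, t`
  have amgm := Real.geom_mean_le_arith_mean univ (fun _ => (1 : ℝ))
    (Fin.cons a fun _ : Fin k => t) (fun _ _ => zero_le_one) (by simp; positivity)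
    (fun i _ => Fin.cases ha (fun _ => ht) i)
  simp only [Real.rpow_one, one_mul, Fin.prod_univ_succ, Fin.sum_univ_succ, Fin.cons_zero,
    Fin.cons_succ, prod_const, sum_const, card_univ, Fintype.card_fin, nsmul_eq_mul,
    Nat.cast_add, Nat.cast_one] at amgm
  calc a * t ^ k = ((a * t ^ k) ^ (((k + 1 : ℕ) : ℝ)⁻¹)) ^ (k + 1) :=
        (Real.rpow_inv_natCast_pow (by positivity) k.succ_ne_zero).symm
    _ ≤ ((a + b) / (k + 1)) ^ (k + 1) := by
        gcongr
        simpa [hb_eq, add_comm] using amgm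

theorem card_le_sum_card_of_head_tail_mem {V : Type*} [DecidableEq V] {k : ℕ}
    (S : Finset (Fin (k + 1) → V)) (T : Finset V) (E : V → Finset (Fin k → V))
    (h : ∀ f ∈ S, f 0 ∈ T ∧ Fin.tail f ∈ E (f 0)) :
    #S ≤ ∑ v ∈ T, #(E v) :=
  calc #S ≤ #(T.biUnion fun v => (E v).image (Fin.cons (α := fun _ => V) v)) :=
        card_le_card fun f hf => mem_biUnion.2
          ⟨f 0, (h f hf).1, mem_image.2 ⟨Fin.tail f, (h f hf).2, Fin.cons_self_tail f⟩⟩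
    _ ≤ ∑ v ∈ T, #((E v).image (Fin.cons (α := fun _ => V) v)) := card_biUnion_le
    _ ≤ ∑ v ∈ T, #(E v) := sum_le_sum fun _ _ => card_image_le

section InducedPathMap

variable {V : Type*} (A : V → V → Prop)

def IsInducedPathMap {m : ℕ} (f : Fin m → V) : Prop :=
  ∀ i j : Fin m, A (f i) (f j) ↔ (j : ℕ) = i + 1

variable {A}

theorem IsInducedPathMap.tail {m : ℕ} {u : V} {f : Fin (m + 1) → V}
    (h : IsInducedPathMap A (Fin.cons u f : Fin (m + 2) → V)) : IsInducedPathMap A f :=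
  fun i j => by simpa using h i.succ j.succ

theorem IsInducedPathMap.adj_cons_zero {m : ℕ} {u : V} {f : Fin (m + 1) → V}
    (h : IsInducedPathMap A (Fin.cons u f : Fin (m + 2) → V)) : A u (f 0) := by
  simpa using (h 0 1).2

theorem IsInducedPathMap.not_adj_cons_succ {m : ℕ} {u : V} {f : Fin (m + 1) → V}
    (h : IsInducedPathMap A (Fin.cons u f : Fin (m + 2) → V)) (i : Fin m) :
    ¬ A u (f i.succ) ∧ ¬ A (f i.succ) u := by
  simpa using And.intro (h 0 i.succ.succ).not (h i.succ.succ 0).not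

variable (A) [Fintype V]

noncomputable def pathExtensions (k : ℕ) (u : V) (s : Finset V) : Finset (Fin k → V) :=
  {g | (∀ i, g i ∈ s) ∧ IsInducedPathMap A (Fin.cons u g : Fin (k + 1) → V)}

theorem card_pathExtensions_le (k : ℕ) (u : V) (s : Finset V) :
    (#(pathExtensions A k u s) : ℝ) ≤ (#s / k) ^ k := by
  induction k generalizing u s with
  | zero => simpa using card_le_univ (pathExtensions A 0 u s)
  | succ k ih =>
    set out := s.filter (A u)
    set far := s.filter fun w => ¬ A u w ∧ ¬ A w u
    -- the second vertex is an out-neighbour of `u`; the rest avoids all neighbours of `u`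
    have hsplit : #(pathExtensions A (k + 1) u s) ≤ ∑ v ∈ out, #(pathExtensions A k v far) := by
      refine card_le_sum_card_of_head_tail_mem _ _ _ fun g hg => ?_
      obtain ⟨hs, hpath⟩ := (mem_filter.1 hg).2
      refine ⟨mem_filter.2 ⟨hs 0, hpath.adj_cons_zero⟩, mem_filter.2 ⟨mem_univ _, ?_, ?_⟩⟩
      · exact fun i => mem_filter.2 ⟨hs i.succ, hpath.not_adj_cons_succ i⟩
      · simpa only [Fin.cons_self_tail] using hpath.tail
    have hcard : #out + #far ≤ #s := by
      rw [← card_union_of_disjoint (disjoint_filter.2 fun _ _ hout hfar => hfar.1 hout)]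
      exact card_le_card (union_subset (filter_subset _ _) (filter_subset _ _))
    calc (#(pathExtensions A (k + 1) u s) : ℝ)
        ≤ ∑ v ∈ out, (#(pathExtensions A k v far) : ℝ) := mod_cast hsplit
      _ ≤ ∑ v ∈ out, ((#far : ℝ) / k) ^ k := sum_le_sum fun v _ => ih v far
      _ = #out * (#far / k) ^ k := by rw [sum_const, nsmul_eq_mul]
      _ ≤ ((#out + #far) / (k + 1)) ^ (k + 1) :=
          mul_div_pow_le_add_div_pow (Nat.cast_nonneg _) (Nat.cast_nonneg _) k
      _ ≤ (#s / (k + 1 : ℕ)) ^ (k + 1) := by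
          push_cast
          gcongr
          exact_mod_cast hcard

theorem card_isInducedPathMap_le (k : ℕ) :
    (#{f : Fin (k + 1) → V | IsInducedPathMap A f} : ℝ) ≤
      Fintype.card V ^ (k + 1) / k ^ k := by
  have hsplit : #{f : Fin (k + 1) → V | IsInducedPathMap A f} ≤
      ∑ u, #(pathExtensions A k u univ) := by
    refine card_le_sum_card_of_head_tail_mem _ _ _ fun f hf =>
      ⟨mem_univ _, mem_filter.2 ⟨mem_univ _, fun _ => mem_univ _, ?_⟩⟩
    simpa only [Fin.cons_self_tail] using (mem_filter.1 hf).2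
  calc (#{f : Fin (k + 1) → V | IsInducedPathMap A f} : ℝ)
      ≤ ∑ u, (#(pathExtensions A k u univ) : ℝ) := mod_cast hsplit
    _ ≤ ∑ _u : V, ((Fintype.card V : ℝ) / k) ^ k :=
        sum_le_sum fun u _ => by simpa using card_pathExtensions_le A k u univ
    _ = Fintype.card V ^ (k + 1) / k ^ k := by
        rw [sum_const, card_univ, nsmul_eq_mul, div_pow, pow_succ', mul_div_assoc]

theorem numPaths_le_card_isInducedPathMap [DecidableEq V] (k : ℕ) :
    numPaths A k ≤ #{f : Fin k → V | IsInducedPathMap A f} := by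
  refine card_le_card_of_surjOn (fun f => univ.image f) ?_
  rintro S hS
  obtain ⟨f, -, hfS, hpath⟩ := (mem_filter.1 hS).2
  exact ⟨f, mem_filter.2 ⟨mem_univ _, hpath⟩, by ext v; simp [hfS]⟩

theorem numPaths_succ_le [DecidableEq V] (k : ℕ) :
    (numPaths A (k + 1) : ℝ) ≤ Fintype.card V ^ (k + 1) / k ^ k :=
  (Nat.cast_le.2 (numPaths_le_card_isInducedPathMap A (k + 1))).trans
    (card_isInducedPathMap_le A k)

end InducedPathMap

theorem tendsto_pow_div_choose (k : ℕ) :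
    Tendsto (fun n : ℕ => (n : ℝ) ^ k / n.choose k) atTop (𝓝 (k.factorial : ℝ)) := by
  have hequiv := (Asymptotics.IsEquivalent.refl (u := fun n : ℕ => (n : ℝ) ^ k)).div
    (isEquivalent_choose k)
  refine hequiv.tendsto_nhds_iff.2 (tendsto_const_nhds.congr' ?_)
  filter_upwards [eventually_ge_atTop 1] with n hn
  have : (n : ℝ) ^ k ≠ 0 := pow_ne_zero _ (by exact_mod_cast (zero_lt_one.trans_le hn).ne')
  simp only [Pi.div_apply]
  field_simp

theorem maxDensityAll_nonneg (k n : ℕ) : 0 ≤ maxDensityAll k n :=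
  Real.sSup_nonneg <| by
    rintro _ ⟨A, -, rfl⟩
    unfold pathDensity
    positivity

theorem maxDensityAll_succ_le (k n : ℕ) :
    maxDensityAll (k + 1) n ≤ (n : ℝ) ^ (k + 1) / k ^ k / n.choose (k + 1) :=
  Real.sSup_le (by
    rintro _ ⟨A, -, rfl⟩
    simpa [pathDensity] using div_le_div_of_nonneg_right (numPaths_succ_le A k)
      (Nat.cast_nonneg (n.choose (k + 1))))
    (by positivity)

theorem limsup_maxDensityAll_succ_le (k : ℕ) :
    atTop.limsup (maxDensityAll (k + 1)) ≤ ((k + 1).factorial : ℝ) / k ^ k := by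
  have hlim : Tendsto (fun n : ℕ => (n : ℝ) ^ (k + 1) / k ^ k / n.choose (k + 1)) atTop
      (𝓝 (((k + 1).factorial : ℝ) / k ^ k)) := by
    simpa only [div_right_comm] using (tendsto_pow_div_choose (k + 1)).div_const ((k : ℝ) ^ k)
  calc atTop.limsup (maxDensityAll (k + 1))
      ≤ atTop.limsup (fun n : ℕ => (n : ℝ) ^ (k + 1) / k ^ k / n.choose (k + 1)) :=
        limsup_le_limsup (.of_forall (maxDensityAll_succ_le k))
          (isCoboundedUnder_le_of_le atTop (maxDensityAll_nonneg _)) hlim.isBoundedUnder_le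
    _ = ((k + 1).factorial : ℝ) / k ^ k := hlim.limsup_eq

/-- Every oriented graph on `n` vertices has at most
`n^k/(k−1)^{k−1}` induced copies of `P⃗ₖ`; consequently `I(P⃗ₖ) ≤ k!/(k−1)^{k−1}`. -/
theorem inducibility_Pk_upper (k : ℕ) (hk : 2 ≤ k) :
    (∀ (n : ℕ) (A : Fin n → Fin n → Prop), IsOriented A →
      (numPaths A k : ℝ) ≤ (n : ℝ) ^ k / ((k : ℝ) - 1) ^ (k - 1)) ∧
    Filter.atTop.limsup (fun n : ℕ => maxDensityAll k n) ≤
      (Nat.factorial k : ℝ) / ((k : ℝ) - 1) ^ (k - 1) := by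
  obtain ⟨m, rfl⟩ : ∃ m, k = m + 1 := ⟨k - 1, by omega⟩
  simp only [Nat.cast_add_one, add_sub_cancel_right]
  exact ⟨fun n A _ => by simpa using numPaths_succ_le A m, limsup_maxDensityAll_succ_le m⟩
end

section
/- For every integer k ≥ 2 and every positive integer n divisible by k+1, the balanced blow-up of the directed (k+1)-cycle C⃗_{k+1} on n vertices (all k+1 parts of size n/(k+1)) is a T⃗₃-free oriented graph containing exactly (k+1)·(n/(k+1))^k induced copies of P⃗_k. Consequently, I(P⃗_k, T⃗) ≥ k! / (k+1)^{k−1}. -/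
open scoped Classical

/-!
Partition the vertices into parts `V₀, …, V_k` indexed by `Fin (k + 1)` and put all arcs from
`V_c` to `V_{c+1}`. An arc goes one step forward around the cycle, so two opposite arcs would
close a cycle of length `2` and a transitive triangle would force `2 = 1`; both are impossible
once `k + 1 ≥ 3`. An induced `P⃗ₖ` must walk forward through `k` consecutive parts
`c, c + 1, …, c + k - 1`, picking one vertex in each, and the part it skips determines `c`.
Hence the copies of `P⃗ₖ` are counted by `∑_c ∏_{i<k} |V_{c+i}|`, which is `(k + 1) mᵏ` for
parts of size `m`. Taking parts the residue classes mod `k + 1` of an `n`-vertex set, every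
part has at least `⌊n/(k+1)⌋ ≥ (n - k)/(k + 1)` vertices, and with `C(n, k) ≤ nᵏ/k!` the
`P⃗ₖ`-density is at least `k!/(k+1)^{k-1} · (1 - k/n)ᵏ`, which tends to the claimed bound.
-/

open Finset Filter
open scoped Nat Topology

section CycleBlowup

variable {V : Type*}

def cycleBlowup {N : ℕ} [NeZero N] (g : V → Fin N) (u v : V) : Prop :=
  g v = g u + 1

theorem isOriented_cycleBlowup {N : ℕ} [NeZero N] (hN : 2 < N) (g : V → Fin N) :
    IsOriented (cycleBlowup g) := by
  intro a b hab hba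
  have htwo : (1 + 1 : Fin N) ≠ 0 := by
    simp [Fin.ext_iff, Fin.val_add, Nat.mod_eq_of_lt, hN]
  rw [cycleBlowup, hab, add_assoc] at hba
  exact htwo (left_eq_add.mp hba)

theorem t3Free_cycleBlowup {N : ℕ} [NeZero N] (hN : 1 < N) (g : V → Fin N) :
    T3Free (cycleBlowup g) := by
  rintro a b c ⟨hab, hbc, hac⟩
  have hone : (1 : Fin N) ≠ 0 := by
    rw [Ne, Fin.one_eq_zero_iff]
    omega
  rw [cycleBlowup] at hbc
  rw [cycleBlowup, hbc, hab, add_assoc, add_right_inj] at hac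
  exact hone (add_eq_right.mp hac)

variable {k : ℕ} (g : V → Fin (k + 1))

theorem image_add_castSucc (c : Fin (k + 1)) :
    univ.image (fun i : Fin k => c + i.castSucc) = univ.erase (c + Fin.last k) := by
  ext x
  simp only [mem_image, mem_univ, true_and, mem_erase, and_true, ← eq_sub_iff_add_eq',
    Fin.exists_castSucc_eq, ne_eq, sub_eq_iff_eq_add']

theorem isInducedPath_image_of_parts [DecidableEq V] {c : Fin (k + 1)} {f : Fin k → V}
    (hf : ∀ i, g (f i) = c + i.castSucc) : IsInducedPath (cycleBlowup g) k (univ.image f) := by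
  refine ⟨f, fun i j hij => ?_, fun v => by simp, fun i j => ?_⟩
  · exact Fin.castSucc_injective _ (add_left_cancel (a := c) (by rw [← hf, ← hf, hij]))
  · rw [cycleBlowup, hf, hf, add_assoc, add_right_inj, Fin.coeSucc_eq_succ, Fin.ext_iff]
    simp

theorem eq_of_image_eq_of_parts {c c' : Fin (k + 1)} {f f' : Fin k → V} [DecidableEq V]
    (hf : ∀ i, g (f i) = c + i.castSucc) (hf' : ∀ i, g (f' i) = c' + i.castSucc)
    (h : univ.image f = univ.image f') : c = c' ∧ f = f' := by
  have hc : c = c' := by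
    have hparts := congrArg (image g) h
    simp only [image_image, Function.comp_def, hf, hf', image_add_castSucc] at hparts
    exact add_right_cancel ((erase_inj _ (mem_univ _)).mp hparts)
  subst hc
  refine ⟨rfl, funext fun i => ?_⟩
  obtain ⟨j, -, hj⟩ := mem_image.mp (h ▸ mem_image_of_mem f (mem_univ i))
  obtain rfl : j = i :=
    Fin.castSucc_injective _ (add_left_cancel (a := c) (by rw [← hf', hj, hf]))
  exact hj.symm

theorem parts_of_isInducedPath {f : Fin k → V}
    (harc : ∀ i j : Fin k, cycleBlowup g (f i) (f j) ↔ (j : ℕ) = i + 1) (i : Fin k) :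
    g (f i) = g (f ⟨0, i.pos⟩) + i.castSucc := by
  obtain ⟨i, hi⟩ := i
  induction i with
  | zero => simp
  | succ i ih =>
    have hstep := (harc ⟨i, by omega⟩ ⟨i + 1, hi⟩).mpr rfl
    rw [cycleBlowup] at hstep
    rw [hstep, ih (by omega), add_assoc, Fin.coeSucc_eq_succ]
    rfl

def cyclePathLabellings [Fintype V] : Finset (Σ _ : Fin (k + 1), Fin k → V) :=
  univ.sigma fun c => Fintype.piFinset fun i => univ.filter fun v => g v = c + i.castSucc

theorem mem_cyclePathLabellings [Fintype V] {p : Σ _ : Fin (k + 1), Fin k → V} :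
    p ∈ cyclePathLabellings g ↔ ∀ i, g (p.2 i) = p.1 + i.castSucc := by
  simp [cyclePathLabellings]

theorem card_cyclePathLabellings [Fintype V] :
    (cyclePathLabellings g).card = ∑ c, ∏ i : Fin k, partSize g (c + i.castSucc) := by
  simp only [cyclePathLabellings, card_sigma, Fintype.card_piFinset]
  rfl

theorem numPaths_cycleBlowup [Fintype V] [DecidableEq V] (hk : 0 < k) :
    numPaths (cycleBlowup g) k = ∑ c, ∏ i : Fin k, partSize g (c + i.castSucc) := by
  rw [← card_cyclePathLabellings, numPaths]
  symm
  refine card_bij (fun p _ => univ.image p.2) (fun p hp => ?_) ?_ (fun S hS => ?_)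
  · exact mem_filter.mpr
      ⟨mem_univ _, isInducedPath_image_of_parts g ((mem_cyclePathLabellings g).mp hp)⟩
  · rintro ⟨c, f⟩ hp ⟨c', f'⟩ hp' hff'
    obtain ⟨rfl, rfl⟩ := eq_of_image_eq_of_parts g ((mem_cyclePathLabellings g).mp hp)
      ((mem_cyclePathLabellings g).mp hp') hff'
    rfl
  · obtain ⟨f, -, hS, harc⟩ := (mem_filter.mp hS).2
    refine ⟨⟨g (f ⟨0, hk⟩), f⟩,
      (mem_cyclePathLabellings g).mpr (parts_of_isInducedPath g harc), ?_⟩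
    ext v
    simp [hS]

theorem numPaths_cycleBlowup_of_partSize_eq [Fintype V] [DecidableEq V] (hk : 0 < k) {m : ℕ}
    (hg : ∀ i, partSize g i = m) : numPaths (cycleBlowup g) k = (k + 1) * m ^ k := by
  simp [numPaths_cycleBlowup g hk, hg]

theorem le_numPaths_cycleBlowup [Fintype V] [DecidableEq V] (hk : 0 < k) {m : ℕ}
    (hg : ∀ i, m ≤ partSize g i) : (k + 1) * m ^ k ≤ numPaths (cycleBlowup g) k := by
  rw [numPaths_cycleBlowup g hk]
  calc (k + 1) * m ^ k = ∑ _c : Fin (k + 1), ∏ _i : Fin k, m := by simp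
    _ ≤ _ := sum_le_sum fun c _ => prod_le_prod' fun i _ => hg _

end CycleBlowup

theorem partSize_ofNat_eq_count (n N : ℕ) [NeZero N] (i : Fin N) :
    partSize (fun v : Fin n => Fin.ofNat N v) i = Nat.count (· ≡ i [MOD N]) n := by
  rw [partSize, Nat.count_eq_card_filter_range, ← card_map Fin.valEmbedding]
  congr 1
  ext x
  simp only [Finset.mem_map, mem_filter, mem_univ, true_and, Fin.valEmbedding_apply, mem_range,
    Nat.ModEq, Fin.ext_iff, Fin.val_ofNat, Nat.mod_eq_of_lt i.2]
  exact ⟨fun ⟨v, hv, hx⟩ => hx ▸ ⟨v.2, hv⟩, fun ⟨hx, h⟩ => ⟨⟨x, hx⟩, h, rfl⟩⟩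

theorem div_le_partSize_ofNat (n N : ℕ) [NeZero N] (i : Fin N) :
    n / N ≤ partSize (fun v : Fin n => Fin.ofNat N v) i := by
  rw [partSize_ofNat_eq_count, Nat.count_modEq_card n (NeZero.pos N)]
  exact Nat.le_add_right _ _

theorem IsInducedPath.card_eq {V : Type*} [DecidableEq V] {A : V → V → Prop} {k : ℕ}
    {S : Finset V} (h : IsInducedPath A k S) : S.card = k := by
  obtain ⟨f, hf, hS, -⟩ := h
  rw [show S = univ.image f by ext v; simp [hS], card_image_of_injective _ hf, card_fin]

section Density

variable {V : Type*} [Fintype V] [DecidableEq V]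

theorem numPaths_le_choose (A : V → V → Prop) (k : ℕ) :
    numPaths A k ≤ (Fintype.card V).choose k := by
  rw [numPaths, ← card_univ, ← card_powersetCard]
  exact card_le_card fun S hS => mem_powersetCard.mpr ⟨subset_univ S, (mem_filter.mp hS).2.card_eq⟩

theorem pathDensity_le_one (A : V → V → Prop) (k : ℕ) : pathDensity A k ≤ 1 :=
  div_le_one_of_le₀ (by exact_mod_cast numPaths_le_choose A k) (Nat.cast_nonneg _)

end Density

theorem pathDensity_le_maxDensityT3 {k n : ℕ} {A : Fin n → Fin n → Prop} (hA : IsOriented A)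
    (hT : T3Free A) : pathDensity A k ≤ maxDensityT3 k n :=
  le_csSup ⟨1, by rintro _ ⟨A, -, -, rfl⟩; exact pathDensity_le_one A k⟩ ⟨A, hA, hT, rfl⟩

theorem maxDensityT3_le_one (k n : ℕ) : maxDensityT3 k n ≤ 1 :=
  csSup_le ⟨_, fun _ _ : Fin n => False, fun _ _ h => h.elim, fun _ _ _ h => h.1.elim, rfl⟩
    (by rintro _ ⟨A, -, -, rfl⟩; exact pathDensity_le_one A k)

theorem factorial_div_mul_one_sub_pow_le {k n : ℕ} (hk : 0 < k) (hkn : k ≤ n) :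
    (k ! : ℝ) / (k + 1) ^ (k - 1) * (1 - k / n) ^ k ≤
      (((k + 1) * (n / (k + 1)) ^ k : ℕ) : ℝ) / n.choose k := by
  have hn : (0 : ℝ) < n := by exact_mod_cast (show 0 < n by omega)
  have hnk : (0 : ℝ) ≤ n - k := sub_nonneg.mpr (by exact_mod_cast hkn)
  have hq : (n : ℝ) - k ≤ (k + 1) * (n / (k + 1) : ℕ) := by
    have h : n ≤ n / (k + 1) * (k + 1) + k := by
      have := Nat.lt_div_mul_add (a := n) (b := k + 1) (by omega)
      omega
    have h' : (n : ℝ) ≤ (n / (k + 1) : ℕ) * (k + 1) + k := by exact_mod_cast h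
    linarith
  have hpow : ((k : ℝ) + 1) ^ k = (k + 1) ^ (k - 1) * (k + 1) := (pow_sub_one_mul hk.ne' _).symm
  rw [le_div_iff₀ (by exact_mod_cast Nat.choose_pos hkn), one_sub_div hn.ne']
  calc _ ≤ (k ! : ℝ) / (k + 1) ^ (k - 1) * ((n - k) / n) ^ k * (n ^ k / k !) := by
        gcongr
        exact Nat.choose_le_pow_div k n
    _ = (n - k) ^ k / (k + 1) ^ (k - 1) := by
        rw [div_pow]
        field_simp
    _ ≤ ((k + 1) * (n / (k + 1) : ℕ)) ^ k / (k + 1) ^ (k - 1) := by gcongr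
    _ = (((k + 1) * (n / (k + 1)) ^ k : ℕ) : ℝ) := by
        rw [mul_pow, hpow]
        push_cast
        field_simp

theorem factorial_div_mul_one_sub_pow_le_maxDensityT3 {k n : ℕ} (hk : 2 ≤ k) (hkn : k ≤ n) :
    (k ! : ℝ) / (k + 1) ^ (k - 1) * (1 - k / n) ^ k ≤ maxDensityT3 k n := by
  let g : Fin n → Fin (k + 1) := fun v => Fin.ofNat (k + 1) v
  calc _ ≤ (((k + 1) * (n / (k + 1)) ^ k : ℕ) : ℝ) / n.choose k :=
        factorial_div_mul_one_sub_pow_le (by omega) hkn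
    _ ≤ pathDensity (cycleBlowup g) k := by
        rw [pathDensity, Fintype.card_fin]
        gcongr
        exact le_numPaths_cycleBlowup g (by omega) (div_le_partSize_ofNat n (k + 1))
    _ ≤ maxDensityT3 k n :=
        pathDensity_le_maxDensityT3 (isOriented_cycleBlowup (by omega) g)
          (t3Free_cycleBlowup (by omega) g)

theorem Filter.Tendsto.le_liminf_of_eventually_le {ι : Type*} {l : Filter ι} [l.NeBot]
    {u v : ι → ℝ} {a : ℝ} (hu : Tendsto u l (𝓝 a)) (huv : ∀ᶠ i in l, u i ≤ v i)
    (hv : IsBoundedUnder (· ≤ ·) l v) : a ≤ liminf v l :=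
  hu.liminf_eq ▸ liminf_le_liminf huv hu.isBoundedUnder_ge hv.isCoboundedUnder_ge

theorem tendsto_one_sub_div_pow (k : ℕ) :
    Tendsto (fun n : ℕ => (1 - k / n : ℝ) ^ k) atTop (𝓝 1) := by
  simpa using ((tendsto_const_div_atTop_nhds_zero_nat (k : ℝ)).const_sub 1).pow k

/-- For `k ≥ 2` and `n = (k+1)m` with `m > 0`, the balanced blow-up of
the directed `(k+1)`-cycle on `n` vertices (every part of size `m`) is a `T⃗₃`-free
oriented graph with exactly `(k+1)·m^k` induced copies of `P⃗ₖ`. Consequently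
`I(P⃗ₖ, T⃗) ≥ k!/(k+1)^{k−1}`. -/
theorem inducibility_Pk_T3free_lower (k : ℕ) (hk : 2 ≤ k) :
    (∀ (m : ℕ), 0 < m →
      ∀ (A : Fin ((k + 1) * m) → Fin ((k + 1) * m) → Prop)
        (g : Fin ((k + 1) * m) → Fin (k + 1)),
        (∀ u v, A u v ↔ g v = g u + 1) →
        (∀ i : Fin (k + 1), partSize g i = m) →
        IsOriented A ∧ T3Free A ∧ numPaths A k = (k + 1) * m ^ k) ∧
    (Nat.factorial k : ℝ) / ((k : ℝ) + 1) ^ (k - 1) ≤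
      Filter.atTop.liminf (fun n : ℕ => maxDensityT3 k n) := by
  refine ⟨fun m _ A g hA hg => ?_, ?_⟩
  · obtain rfl : A = cycleBlowup g := funext₂ fun u v => propext (hA u v)
    exact ⟨isOriented_cycleBlowup (by omega) g, t3Free_cycleBlowup (by omega) g,
      numPaths_cycleBlowup_of_partSize_eq g (by omega) hg⟩
  · have hlim := (tendsto_one_sub_div_pow k).const_mul ((k ! : ℝ) / (k + 1) ^ (k - 1))
    rw [mul_one] at hlim
    exact hlim.le_liminf_of_eventually_le
      (eventually_atTop.mpr ⟨k, fun n hn => factorial_div_mul_one_sub_pow_le_maxDensityT3 hk hn⟩)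
      (isBoundedUnder_of ⟨1, maxDensityT3_le_one k⟩)
end

section
/- Let G be an oriented graph and let j be a positive integer. Let B be the uniform j-fold blow-up of G, i.e., each vertex v of G is replaced by an independent set X_v of size j, with all arcs from X_u to X_v whenever u→v is an arc of G and no other arcs. Then the number of induced copies of P⃗₄ in B equals j⁴ times the number of induced copies of P⃗₄ in G. Moreover, if G is T⃗₃-free then B is T⃗₃-free. -/
open scoped Classical

/-!
An induced copy of `P⃗ₖ` has exactly one labelling `f : Fin k → V` along its arcs, so
copies can be counted as labellings. A labelling of the blow-up on `V × W` is a labelling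
of `A` together with an arbitrary choice `Fin k → W` of copies, whence the factor `|W| ^ k`.
`T⃗₃`-freeness pulls back along the projection `V × W → V`.
-/

def IsPathLabelling {V : Type*} (A : V → V → Prop) (k : ℕ) (f : Fin k → V) : Prop :=
  ∀ a b : Fin k, A (f a) (f b) ↔ (b : ℕ) = (a : ℕ) + 1

namespace IsPathLabelling

variable {V : Type*} {A : V → V → Prop} {k : ℕ} {f g : Fin k → V}

theorem arc (hf : IsPathLabelling A k f) {a b : Fin k} (hab : (b : ℕ) = a + 1) :
    A (f a) (f b) :=
  (hf a b).2 hab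

theorem injective (hf : IsPathLabelling A k f) : Function.Injective f := by
  have key : ∀ a b : Fin k, f a = f b → (a : ℕ) + 1 < k → a = b := by
    intro a b hab ha
    have := hf.arc (a := a) (b := ⟨a + 1, ha⟩) rfl
    rw [hab, hf] at this
    exact Fin.ext (by simpa using this)
  intro a b hab
  by_cases ha : (a : ℕ) + 1 < k
  · exact key a b hab ha
  by_cases hb : (b : ℕ) + 1 < k
  · exact (key b a hab.symm hb).symm
  · exact Fin.ext (by omega)

/-- An induced path determines the order of its vertices: reindexing one labelling
by the other gives a map `τ` with `τ (i + 1) = τ i + 1`, so `τ i = τ 0 + i`, which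
fits in `Fin k` only if `τ 0 = 0`. -/
theorem eq_of_range_eq (hf : IsPathLabelling A k f) (hg : IsPathLabelling A k g)
    (hfg : Set.range f = Set.range g) : f = g := by
  have hτ : ∀ i, ∃ t, f t = g i := fun i => (hfg ▸ Set.mem_range_self i : g i ∈ Set.range f)
  choose τ hτ using hτ
  funext i
  have hk : 0 < k := i.pos
  have hshift : ∀ m : Fin k, (τ m : ℕ) = τ ⟨0, hk⟩ + m := by
    rintro ⟨m, hm⟩
    induction m with
    | zero => rfl
    | succ m ih =>
      have harc := hg.arc (a := ⟨m, by omega⟩) (b := ⟨m + 1, hm⟩) rfl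
      rw [← hτ, ← hτ, hf] at harc
      rw [harc, ih (by omega)]
      rfl
  have hτ0 : (τ ⟨0, hk⟩ : ℕ) = 0 := by
    have hlast := hshift ⟨k - 1, by omega⟩
    have := (τ ⟨k - 1, by omega⟩).isLt
    simp only at hlast
    omega
  rw [← hτ i]
  congr 1
  exact Fin.ext (by rw [hshift, hτ0, zero_add])

end IsPathLabelling

/-- `P⃗ₖ` has no nontrivial automorphism, so each copy has exactly one labelling. -/
theorem numPaths_eq_card_pathLabelling {V : Type*} [Fintype V] [DecidableEq V]
    (A : V → V → Prop) (k : ℕ) :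
    numPaths A k = Fintype.card {f : Fin k → V // IsPathLabelling A k f} := by
  rw [Fintype.card_subtype, numPaths]
  symm
  refine Finset.card_bij (fun f _ => Finset.univ.image f) ?_ ?_ ?_
  · intro f hf
    simp only [Finset.mem_filter, Finset.mem_univ, true_and] at hf ⊢
    exact ⟨f, hf.injective, fun v => by simp, hf⟩
  · intro f hf g hg hfg
    simp only [Finset.mem_filter, Finset.mem_univ, true_and] at hf hg
    refine hf.eq_of_range_eq hg ?_
    simpa [← Finset.coe_inj] using hfg
  · intro S hS
    simp only [Finset.mem_filter, Finset.mem_univ, true_and] at hS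
    obtain ⟨f, -, hmem, hpath⟩ := hS
    refine ⟨f, Finset.mem_filter.2 ⟨Finset.mem_univ f, hpath⟩, ?_⟩
    ext v
    simp [hmem v, eq_comm]

def pathLabellingBlowupEquiv {V W : Type*} (A : V → V → Prop) (k : ℕ) :
    {f : Fin k → V × W // IsPathLabelling (fun p q : V × W => A p.1 q.1) k f} ≃
      {g : Fin k → V // IsPathLabelling A k g} × (Fin k → W) where
  toFun f := (⟨fun i => (f.1 i).1, f.2⟩, fun i => (f.1 i).2)
  invFun p := ⟨fun i => (p.1.1 i, p.2 i), p.1.2⟩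
  left_inv _ := rfl
  right_inv _ := rfl

theorem numPaths_blowup {V W : Type*} [Fintype V] [DecidableEq V] [Fintype W]
    [DecidableEq W] (A : V → V → Prop) (k : ℕ) :
    numPaths (fun p q : V × W => A p.1 q.1) k = Fintype.card W ^ k * numPaths A k := by
  rw [numPaths_eq_card_pathLabelling, numPaths_eq_card_pathLabelling,
    Fintype.card_congr (pathLabellingBlowupEquiv A k), Fintype.card_prod,
    Fintype.card_fun, Fintype.card_fin, mul_comm]

theorem T3Free.comap {V W : Type*} {A : V → V → Prop} (hA : T3Free A) (φ : W → V) :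
    T3Free fun x y => A (φ x) (φ y) :=
  fun a b c => hA (φ a) (φ b) (φ c)

theorem uniform_blowup_P4_general {V : Type*} [Fintype V] [DecidableEq V]
    (A : V → V → Prop) (j : ℕ) :
    numPaths (fun p q : V × Fin j => A p.1 q.1) 4 = j ^ 4 * numPaths A 4 ∧
    (T3Free A → T3Free (fun p q : V × Fin j => A p.1 q.1)) := by
  refine ⟨?_, fun hA => hA.comap Prod.fst⟩
  rw [numPaths_blowup, Fintype.card_fin]

/-- The uniform `j`-fold blow-up `B` of an oriented graph `A`
(vertex set `V × Fin j`, with an arc `(u,a) → (v,b)` iff `u → v` in `A`) has exactly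
`j⁴` times as many induced copies of `P⃗₄` as `A`, and is `T⃗₃`-free whenever `A` is. -/
theorem uniform_blowup_P4 {V : Type*} [Fintype V] [DecidableEq V]
    (A : V → V → Prop) (hA : IsOriented A) (j : ℕ) (hj : 0 < j) :
    numPaths (fun p q : V × Fin j => A p.1 q.1) 4 = j ^ 4 * numPaths A 4 ∧
    (T3Free A → T3Free (fun p q : V × Fin j => A p.1 q.1)) :=
  uniform_blowup_P4_general A j
end
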